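/- Fix λ, χ, Θ > 0, δ > 0, ε ≥ 0, and N ∈ ℕ. There exist constants 𝒞 > 0 and C > 0, independent of N, such that for every zero-mean h ∈ A⁶(𝕋) with ‖h‖_{A¹} ≤ 𝒞, there exists a unique zero-mean U ∈ A⁴(𝕋) satisfying L_h U = N^N_{δ,ε}(h), and this U obeys the bound ‖U‖_{A⁰} + (√δ Θ/2) ‖U‖_{A⁴} ≤ C √δ ( (1 + ‖h‖_{A⁰}) (‖h‖_{A²} + ‖P_N h‖_{A⁶}) + ‖h‖_{A¹} ‖P_N h‖_{A⁵} ). -/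

import Mathlib

open scoped BigOperators
open MeasureTheory Filter

noncomputable section

/-- A zero-mean periodic function, identified with its sequence of Fourier coefficients. -/
abbrev Coeffs := ℤ → ℂ

/-- Wiener norm `‖f‖_{A^s} = Σ_k |k|^s |f̂(k)|`. -/
def Anorm (s : ℝ) (f : Coeffs) : ℝ :=
  ∑' k : ℤ, |(k : ℝ)| ^ s * ‖f k‖

/-- Membership in the Wiener space `A^s`. -/
def InA (s : ℝ) (f : Coeffs) : Prop :=
  Summable fun k : ℤ => |(k : ℝ)| ^ s * ‖f k‖

/-- `G₀ = Λ tanh Λ`, the Fourier multiplier with symbol `|k| tanh |k|`. -/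
def G0 (f : Coeffs) : Coeffs := fun k =>
  ((|(k : ℝ)| * Real.tanh |(k : ℝ)| : ℝ) : ℂ) * f k

/-- The `n`-th spatial derivative `∂ₓⁿ`, i.e. the multiplier with symbol `(i k)^n`. -/
def Dx (n : ℕ) (f : Coeffs) : Coeffs := fun k =>
  (Complex.I * (k : ℂ)) ^ n * f k

/-- Product of periodic functions = convolution of Fourier coefficient sequences. -/
def conv (f g : Coeffs) : Coeffs := fun k => ∑' m : ℤ, f m * g (k - m)

/-- `L₀ = 1 - Θ G₀ ∂ₓₓ`, the multiplier with symbol `1 + Θ |k|³ tanh |k|`. -/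
def L0 (Θ : ℝ) (f : Coeffs) : Coeffs := fun k =>
  ((1 + Θ * |(k : ℝ)| ^ (3 : ℕ) * Real.tanh |(k : ℝ)| : ℝ) : ℂ) * f k

/-- `L₀⁻¹`, the multiplier with symbol `(1 + Θ |k|³ tanh |k|)⁻¹`. -/
def L0inv (Θ : ℝ) (f : Coeffs) : Coeffs := fun k =>
  f k / ((1 + Θ * |(k : ℝ)| ^ (3 : ℕ) * Real.tanh |(k : ℝ)| : ℝ) : ℂ)

/-- `I(h,V) = G₀(h · G₀ ∂ₓₓ V) + ∂ₓ(h · ∂ₓₓₓ V)`. -/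
def Iop (h V : Coeffs) : Coeffs := fun k =>
  G0 (conv h (G0 (Dx 2 V))) k + Dx 1 (conv h (Dx 3 V)) k

/-- `I(h,V)` given directly by its Fourier coefficient formula. -/
def IopF (h V : Coeffs) : Coeffs := fun k =>
  ∑' m : ℤ,
    ((|(k : ℝ)| * |((k - m : ℤ) : ℝ)| ^ (3 : ℕ) *
      ((Int.sign k : ℝ) * (Int.sign (k - m) : ℝ) -
        Real.tanh |(k : ℝ)| * Real.tanh |((k - m : ℤ) : ℝ)|) : ℝ) : ℂ) *
      h m * V (k - m)

/-- The sign-interaction part `I_A`. -/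
def IA (h V : Coeffs) : Coeffs := fun k =>
  ∑' m : ℤ,
    ((|(k : ℝ)| * |((k - m : ℤ) : ℝ)| ^ (3 : ℕ) *
      ((Int.sign k : ℝ) * (Int.sign (k - m) : ℝ) - 1) : ℝ) : ℂ) *
      h m * V (k - m)

/-- The smooth-remainder part `I_B`. -/
def IB (h V : Coeffs) : Coeffs := fun k =>
  ∑' m : ℤ,
    ((|(k : ℝ)| * |((k - m : ℤ) : ℝ)| ^ (3 : ℕ) *
      (1 - Real.tanh |(k : ℝ)| * Real.tanh |((k - m : ℤ) : ℝ)|) : ℝ) : ℂ) *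
      h m * V (k - m)

/-- For a given profile `h`, the operator `L_h U = L₀ U + σ Θ I(h,U)`. -/
def Lop (Θ σ : ℝ) (h U : Coeffs) : Coeffs := fun k =>
  L0 Θ U k + ((σ * Θ : ℝ) : ℂ) * Iop h U k

/-- `N(h) = -χ G₀ h + σχ (G₀(h · G₀ h) + ∂ₓ(h · ∂ₓ h))`. -/
def Nop (χ σ : ℝ) (h : Coeffs) : Coeffs := fun k =>
  -(χ : ℂ) * G0 h k +
    ((σ * χ : ℝ) : ℂ) * (G0 (conv h (G0 h)) k + Dx 1 (conv h (Dx 1 h)) k)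

/-- `N_λ(h)`, the weakly nonlinear right-hand side with elasticity. -/
def Nlam (lam χ σ : ℝ) (h : Coeffs) : Coeffs := fun k =>
  -(χ : ℂ) * G0 h k - ((lam / 4 : ℝ) : ℂ) * G0 (Dx 4 h) k
    + ((σ * χ : ℝ) : ℂ) * (G0 (conv h (G0 h)) k + Dx 1 (conv h (Dx 1 h)) k)
    + ((σ * lam / 4 : ℝ) : ℂ) *
        (G0 (conv h (G0 (Dx 4 h))) k + Dx 1 (conv h (Dx 5 h)) k)

/-- Fourier projection onto modes `|k| ≤ N`. -/
def PN (N : ℕ) (f : Coeffs) : Coeffs := fun k => if |k| ≤ (N : ℤ) then f k else 0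

/-- Truncated nonlinearity `F_N(h)` of the Galerkin approximation. -/
def FN (lam χ σ : ℝ) (N : ℕ) (h : Coeffs) : Coeffs := fun k =>
  -(χ : ℂ) * G0 h k - ((lam / 4 : ℝ) : ℂ) * G0 (Dx 4 (PN N h)) k
    + ((σ * χ : ℝ) : ℂ) * (G0 (conv h (G0 h)) k + Dx 1 (conv h (Dx 1 h)) k)
    + ((σ * lam / 4 : ℝ) : ℂ) *
        (G0 (conv h (G0 (Dx 4 (PN N h)))) k + Dx 1 (conv h (Dx 5 (PN N h))) k)

/-- `μ = L₀⁻¹(-χ G₀ h - (λ/4) G₀ ∂ₓ⁴ h)`. -/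
def muOf (lam χ Θ : ℝ) (h : Coeffs) : Coeffs :=
  L0inv Θ (fun k => -(χ : ℂ) * G0 h k - ((lam / 4 : ℝ) : ℂ) * G0 (Dx 4 h) k)

/-- Right-hand side of the second weakly nonlinear model (integrated form). -/
def RHS2 (lam χ Θ σ : ℝ) (h : Coeffs) : Coeffs :=
  L0inv Θ (fun k => Nlam lam χ σ h k - ((σ * Θ : ℝ) : ℂ) *
    (G0 (conv h (G0 (Dx 2 (muOf lam χ Θ h)))) k +
      Dx 1 (conv h (Dx 3 (muOf lam χ Θ h))) k))

/-- Thin-film operator `L_h U = U + √δ Θ ∂ₓ((1+εh) ∂ₓ³ U)`. -/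
def Lthin (δ Θ ε : ℝ) (h U : Coeffs) : Coeffs := fun k =>
  U k + ((Real.sqrt δ * Θ : ℝ) : ℂ) *
    Dx 1 (fun j => Dx 3 U j + (ε : ℂ) * conv h (Dx 3 U) j) k

/-- Thin-film nonlinearity `N_{δ,ε}(h) = √δ ∂ₓ((1+εh) ∂ₓ(χh + (λ/4)∂ₓ⁴h))`. -/
def Nthin (δ ε χ lam : ℝ) (h : Coeffs) : Coeffs :=
  fun k => ((Real.sqrt δ : ℝ) : ℂ) *
    Dx 1 (fun j =>
      Dx 1 (fun m => (χ : ℂ) * h m + ((lam / 4 : ℝ) : ℂ) * Dx 4 h m) j +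
      (ε : ℂ) * conv h (Dx 1 (fun m => (χ : ℂ) * h m + ((lam / 4 : ℝ) : ℂ) * Dx 4 h m)) j) k

/-- Truncated thin-film nonlinearity `N^N_{δ,ε}(h)`. -/
def NthinN (δ ε χ lam : ℝ) (N : ℕ) (h : Coeffs) : Coeffs :=
  fun k => ((Real.sqrt δ : ℝ) : ℂ) *
    Dx 1 (fun j =>
      Dx 1 (fun m => (χ : ℂ) * h m + ((lam / 4 : ℝ) : ℂ) * Dx 4 (PN N h) m) j +
      (ε : ℂ) * conv h (Dx 1 (fun m => (χ : ℂ) * h m + ((lam / 4 : ℝ) : ℂ) * Dx 4 (PN N h) m)) j) k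

/-- Inverse of `L⋆ = I + √δ Θ ∂ₓ⁴`, the multiplier with symbol `(1 + √δ Θ k⁴)⁻¹`. -/
def LstarInv (δ Θ : ℝ) (f : Coeffs) : Coeffs := fun k =>
  f k / ((1 + Real.sqrt δ * Θ * (k : ℝ) ^ (4 : ℕ) : ℝ) : ℂ)

/-- Continuity of a curve of coefficients with respect to the `A^s` norm, on a set `S ⊆ ℝ`. -/
def ContOnA (s : ℝ) (S : Set ℝ) (h : ℝ → Coeffs) : Prop :=
  ∀ t ∈ S, ∀ ε > 0, ∃ δ > 0, ∀ t' ∈ S, |t' - t| < δ →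
    Anorm s (fun k => h t' k - h t k) < ε

/-!
Write `L_h = L⋆ + B_h` with `L⋆ = I + √δ Θ ∂ₓ⁴` and `B_h U = √δ Θ ε ∂ₓ(h ∂ₓ³U)`. In the unknown
`V = L⋆ U` the equation becomes `V + B_h L⋆⁻¹ V = F` on `ℓ¹`, and
`‖V‖_{ℓ¹} = ‖U‖_{A⁰} + √δ Θ ‖U‖_{A⁴}`.
Since the weight `1 + |k|` is submultiplicative, `‖∂ₓ(h g)‖_{A⁰} ≤ ‖h‖_{A⁰∩A¹} ‖g‖_{A⁰∩A¹}`; this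
bounds `B_h L⋆⁻¹` on `ℓ¹` by `2ε‖h‖_{A⁰∩A¹} ≤ 4ε‖h‖_{A¹}`, a contraction with constant `1/2` once
`‖h‖_{A¹}` is small. Banach's fixed point theorem gives a unique `V`, with `‖V‖_{ℓ¹} ≤ 2‖F‖_{ℓ¹}`,
and the same product estimate bounds `‖N^N_{δ,ε}(h)‖_{ℓ¹}` by a multiple of
`√δ (χ‖h‖_{A²} + (λ/4)‖P_N h‖_{A⁶})`.
-/

open scoped NNReal

theorem summable_mul_sub_of_nonneg {G : Type*} [AddGroup G] {a b : G → ℝ} (ha : 0 ≤ a)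
    (hb : 0 ≤ b) (hA : Summable a) (hB : Summable b) (k : G) :
    Summable fun m => a m * b (k - m) :=
  (hA.mul_right (∑' j, b j)).of_nonneg_of_le (fun m => mul_nonneg (ha m) (hb _))
    fun m => mul_le_mul_of_nonneg_left (hB.le_tsum _ fun j _ => hb j) (ha m)

theorem hasSum_tsum_mul_sub_of_nonneg {G : Type*} [AddGroup G] {a b : G → ℝ} (ha : 0 ≤ a)
    (hb : 0 ≤ b) (hA : Summable a) (hB : Summable b) :
    HasSum (fun k => ∑' m, a m * b (k - m)) ((∑' m, a m) * ∑' j, b j) := by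
  let e : G × G ≃ G × G :=
    { toFun := fun p => (p.2, p.1 - p.2)
      invFun := fun p => (p.2 + p.1, p.1)
      left_inv := fun p => by simp
      right_inv := fun p => by simp }
  have hprod := hA.mul_of_nonneg hB ha hb
  have hsheared : HasSum (fun p : G × G => a p.2 * b (p.1 - p.2)) ((∑' m, a m) * ∑' j, b j) := by
    rw [hA.tsum_mul_tsum hB hprod]
    exact e.hasSum_iff.2 hprod.hasSum
  exact hsheared.prod_fiberwise fun k => (hsheared.summable.prod_factor k).hasSum

theorem existsUnique_add_eq_of_norm_le {E : Type*} [NormedAddCommGroup E] [CompleteSpace E]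
    (B : E →+ E) {K : ℝ≥0} (hK : K < 1) (hB : ∀ x, ‖B x‖ ≤ K * ‖x‖) (f : E) :
    ∃! x, x + B x = f := by
  have hΦ : ContractingWith K fun x => f - B x := by
    refine ⟨hK, LipschitzWith.of_dist_le_mul fun x y => ?_⟩
    rw [dist_eq_norm, dist_eq_norm, sub_sub_sub_cancel_left, ← map_sub]
    exact hB (y - x) |>.trans_eq (by rw [norm_sub_rev])
  have fixed_iff : ∀ x, Function.IsFixedPt (fun x => f - B x) x ↔ x + B x = f := fun x => by
    rw [Function.IsFixedPt, sub_eq_iff_eq_add, eq_comm]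
  exact ⟨_, (fixed_iff _).1 (hΦ.fixedPoint_isFixedPt),
    fun y hy => hΦ.fixedPoint_unique ((fixed_iff y).2 hy)⟩

theorem memℓp_one_iff {α E : Type*} [NormedAddCommGroup E] {f : α → E} :
    Memℓp f 1 ↔ Summable fun i => ‖f i‖ := by
  simp [memℓp_gen_iff (p := 1) (by norm_num)]

theorem lp.norm_eq_tsum_norm {α E : Type*} [NormedAddCommGroup E]
    (f : lp (fun _ : α => E) 1) : ‖f‖ = ∑' i, ‖f i‖ := by
  simp [lp.norm_eq_tsum_rpow (p := 1) (by norm_num) f]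

theorem existsUnique_add_eq_of_tsum_norm_le {α E : Type*} [NormedAddCommGroup E] [CompleteSpace E]
    (T : (α → E) → α → E)
    (hT_add : ∀ x y, Summable (‖x ·‖) → Summable (‖y ·‖) → T (x + y) = T x + T y)
    {K : ℝ≥0} (hK : K < 1)
    (hT : ∀ x, Summable (‖x ·‖) → Summable (‖T x ·‖) ∧ ∑' i, ‖T x i‖ ≤ K * ∑' i, ‖x i‖)
    {f : α → E} (hf : Summable (‖f ·‖)) :
    ∃ x, Summable (‖x ·‖) ∧ x + T x = f ∧
      ∀ y, Summable (‖y ·‖) → y + T y = f → y = x := by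
  have summable (x : lp (fun _ : α => E) 1) : Summable (‖x ·‖) := memℓp_one_iff.1 x.2
  let B : lp (fun _ : α => E) 1 →+ lp (fun _ : α => E) 1 :=
    AddMonoidHom.mk' (fun x => ⟨T x, memℓp_one_iff.2 (hT x (summable x)).1⟩) fun x y =>
      Subtype.ext (hT_add x y (summable x) (summable y))
  have hB (x : lp (fun _ : α => E) 1) : ‖B x‖ ≤ K * ‖x‖ := by
    rw [lp.norm_eq_tsum_norm, lp.norm_eq_tsum_norm]
    exact (hT x (summable x)).2
  obtain ⟨x, hx, huniq⟩ := existsUnique_add_eq_of_norm_le B hK hB ⟨f, memℓp_one_iff.2 hf⟩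
  refine ⟨x, summable x, congrArg Subtype.val hx, fun y hy hyf => ?_⟩
  have := huniq ⟨y, memℓp_one_iff.2 hy⟩ (Subtype.ext hyf)
  exact congrArg Subtype.val this

theorem one_le_abs_intCast {k : ℤ} (hk : k ≠ 0) : (1 : ℝ) ≤ |(k : ℝ)| := by
  exact_mod_cast Int.one_le_abs hk

theorem one_add_abs_le_mul_one_add_abs (k m : ℤ) :
    1 + |(k : ℝ)| ≤ (1 + |(m : ℝ)|) * (1 + |((k - m : ℤ) : ℝ)|) := by
  have : |(k : ℝ)| ≤ |(m : ℝ)| + |((k - m : ℤ) : ℝ)| := by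
    simpa using abs_add_le (m : ℝ) ((k - m : ℤ) : ℝ)
  nlinarith [abs_nonneg (m : ℝ), abs_nonneg ((k - m : ℤ) : ℝ)]

theorem one_add_abs_mul_pow_le (j : ℤ) (n : ℕ) :
    (1 + |(j : ℝ)|) * |(j : ℝ)| ^ (n + 1) ≤ 2 * |(j : ℝ)| ^ (n + 2) := by
  rcases eq_or_ne j 0 with rfl | hj
  · simp
  · have := one_le_abs_intCast hj
    rw [pow_succ _ (n + 1), mul_comm _ |(j : ℝ)|, ← mul_assoc]
    gcongr
    linarith

theorem norm_Dx (n : ℕ) (f : Coeffs) (k : ℤ) : ‖Dx n f k‖ = |(k : ℝ)| ^ n * ‖f k‖ := by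
  rw [Dx, norm_mul, norm_pow, norm_mul, Complex.norm_I, one_mul, Complex.norm_intCast]

theorem Anorm_nonneg (s : ℝ) (f : Coeffs) : 0 ≤ Anorm s f :=
  tsum_nonneg fun _ => by positivity

theorem abs_rpow_mul_norm_le_of_apply_zero {f : Coeffs} (hf0 : f 0 = 0) {a b : ℝ} (hab : a ≤ b)
    (k : ℤ) : |(k : ℝ)| ^ a * ‖f k‖ ≤ |(k : ℝ)| ^ b * ‖f k‖ := by
  rcases eq_or_ne k 0 with rfl | hk
  · simp [hf0]
  · gcongr
    exact one_le_abs_intCast hk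

theorem InA.mono {f : Coeffs} {a b : ℝ} (hf : InA b f) (hf0 : f 0 = 0) (hab : a ≤ b) : InA a f :=
  hf.of_nonneg_of_le (fun _ => by positivity) (abs_rpow_mul_norm_le_of_apply_zero hf0 hab)

theorem summable_one_add_abs_mul_norm_and_tsum_le {f : Coeffs} (hf0 : f 0 = 0) (hf : InA 1 f) :
    Summable (fun k : ℤ => (1 + |(k : ℝ)|) * ‖f k‖) ∧
      ∑' k : ℤ, (1 + |(k : ℝ)|) * ‖f k‖ ≤ 2 * Anorm 1 f := by
  have hle (k : ℤ) : (1 + |(k : ℝ)|) * ‖f k‖ ≤ 2 * (|(k : ℝ)| ^ (1 : ℝ) * ‖f k‖) := by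
    rcases eq_or_ne k 0 with rfl | hk
    · simp [hf0]
    · rw [Real.rpow_one]
      nlinarith [one_le_abs_intCast hk, norm_nonneg (f k)]
  have hsum := hf.mul_left 2
  have hsum' := hsum.of_nonneg_of_le (fun _ => by positivity) hle
  refine ⟨hsum', ?_⟩
  rw [Anorm, ← tsum_mul_left]
  exact hsum'.tsum_le_tsum hle hsum

theorem summable_norm_of_summable_one_add_abs_mul {f : Coeffs}
    (hf : Summable fun k : ℤ => (1 + |(k : ℝ)|) * ‖f k‖) : Summable (‖f ·‖) :=
  hf.of_nonneg_of_le (fun _ => norm_nonneg _) fun _ =>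
    le_mul_of_one_le_left (norm_nonneg _) (by simp)

theorem summable_conv_apply {f g : Coeffs} (hf : Summable (‖f ·‖)) (hg : Summable (‖g ·‖))
    (k : ℤ) : Summable fun m => f m * g (k - m) :=
  Summable.of_norm <| by
    simpa only [norm_mul] using summable_mul_sub_of_nonneg (fun _ => norm_nonneg _)
      (fun _ => norm_nonneg _) hf hg k

theorem conv_add {f g g' : Coeffs} (hf : Summable (‖f ·‖)) (hg : Summable (‖g ·‖))
    (hg' : Summable (‖g' ·‖)) : conv f (g + g') = conv f g + conv f g' := by
  funext k
  simp only [conv, Pi.add_apply, mul_add]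
  exact (summable_conv_apply hf hg k).tsum_add (summable_conv_apply hf hg' k)

theorem summable_conv_and_tsum_le {f g : Coeffs}
    (hf : Summable fun m : ℤ => (1 + |(m : ℝ)|) * ‖f m‖)
    (hg : Summable fun j : ℤ => (1 + |(j : ℝ)|) * ‖g j‖) :
    Summable (fun k : ℤ => (1 + |(k : ℝ)|) * ‖conv f g k‖) ∧
      ∑' k : ℤ, (1 + |(k : ℝ)|) * ‖conv f g k‖ ≤
        (∑' m : ℤ, (1 + |(m : ℝ)|) * ‖f m‖) * ∑' j : ℤ, (1 + |(j : ℝ)|) * ‖g j‖ := by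
  have hf0 := summable_norm_of_summable_one_add_abs_mul hf
  have hg0 := summable_norm_of_summable_one_add_abs_mul hg
  have hY := hasSum_tsum_mul_sub_of_nonneg (fun _ => by positivity) (fun _ => by positivity) hf hg
  have hpt (k : ℤ) : (1 + |(k : ℝ)|) * ‖conv f g k‖ ≤
      ∑' m : ℤ, (1 + |(m : ℝ)|) * ‖f m‖ * ((1 + |((k - m : ℤ) : ℝ)|) * ‖g (k - m)‖) := by
    have hslice := summable_mul_sub_of_nonneg (fun _ => norm_nonneg _) (fun _ => norm_nonneg _)
      hf0 hg0 k
    calc (1 + |(k : ℝ)|) * ‖conv f g k‖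
        ≤ (1 + |(k : ℝ)|) * ∑' m, ‖f m‖ * ‖g (k - m)‖ := by
          gcongr
          simpa only [conv, norm_mul] using
            norm_tsum_le_tsum_norm (f := fun m => f m * g (k - m))
              (by simpa only [norm_mul] using hslice)
      _ = ∑' m, (1 + |(k : ℝ)|) * (‖f m‖ * ‖g (k - m)‖) := tsum_mul_left.symm
      _ ≤ _ := by
          refine (hslice.mul_left _).tsum_le_tsum (fun m => ?_)
            (summable_mul_sub_of_nonneg (fun _ => by positivity) (fun _ => by positivity) hf hg k)
          have := one_add_abs_le_mul_one_add_abs k m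
          calc (1 + |(k : ℝ)|) * (‖f m‖ * ‖g (k - m)‖)
              ≤ (1 + |(m : ℝ)|) * (1 + |((k - m : ℤ) : ℝ)|) * (‖f m‖ * ‖g (k - m)‖) := by
                gcongr
            _ = _ := by ring
  exact ⟨hY.summable.of_nonneg_of_le (fun _ => by positivity) hpt,
    (Summable.tsum_le_tsum hpt (hY.summable.of_nonneg_of_le (fun _ => by positivity) hpt)
      hY.summable).trans_eq hY.tsum_eq⟩

theorem summable_Dx_one_conv_and_tsum_le {f g : Coeffs}
    (hf : Summable fun m : ℤ => (1 + |(m : ℝ)|) * ‖f m‖)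
    (hg : Summable fun j : ℤ => (1 + |(j : ℝ)|) * ‖g j‖) :
    Summable (fun k => ‖Dx 1 (conv f g) k‖) ∧
      ∑' k, ‖Dx 1 (conv f g) k‖ ≤
        (∑' m : ℤ, (1 + |(m : ℝ)|) * ‖f m‖) * ∑' j : ℤ, (1 + |(j : ℝ)|) * ‖g j‖ := by
  obtain ⟨hsum, hle⟩ := summable_conv_and_tsum_le hf hg
  have hpt (k : ℤ) : ‖Dx 1 (conv f g) k‖ ≤ (1 + |(k : ℝ)|) * ‖conv f g k‖ := by
    rw [norm_Dx, pow_one]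
    gcongr
    linarith
  have hsum' := hsum.of_nonneg_of_le (fun _ => norm_nonneg _) hpt
  exact ⟨hsum', (hsum'.tsum_le_tsum hpt hsum).trans hle⟩

def Lstar (δ Θ : ℝ) (U : Coeffs) : Coeffs := fun k =>
  ((1 + Real.sqrt δ * Θ * (k : ℝ) ^ (4 : ℕ) : ℝ) : ℂ) * U k

def Bthin (δ Θ ε : ℝ) (h U : Coeffs) : Coeffs := fun k =>
  ((Real.sqrt δ * Θ * ε : ℝ) : ℂ) * Dx 1 (conv h (Dx 3 U)) k

section Lstar

variable {δ Θ : ℝ}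

theorem Lthin_eq_Lstar_add_Bthin (ε : ℝ) (h U : Coeffs) :
    Lthin δ Θ ε h U = Lstar δ Θ U + Bthin δ Θ ε h U := by
  funext k
  have hI : Complex.I ^ 4 = 1 := Complex.I_pow_four
  simp only [Lthin, Lstar, Bthin, Dx, Pi.add_apply]
  push_cast
  linear_combination (Real.sqrt δ * Θ * (k : ℂ) ^ 4 * U k) * hI

theorem Lstar_symbol_pos (hΘ : 0 ≤ Θ) (k : ℤ) : 0 < 1 + Real.sqrt δ * Θ * (k : ℝ) ^ (4 : ℕ) := by
  positivity

theorem LstarInv_Lstar (hΘ : 0 ≤ Θ) (U : Coeffs) : LstarInv δ Θ (Lstar δ Θ U) = U := by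
  funext k
  exact mul_div_cancel_left₀ _ (Complex.ofReal_ne_zero.2 (Lstar_symbol_pos hΘ k).ne')

theorem Lstar_LstarInv (hΘ : 0 ≤ Θ) (V : Coeffs) : Lstar δ Θ (LstarInv δ Θ V) = V := by
  funext k
  exact mul_div_cancel₀ _ (Complex.ofReal_ne_zero.2 (Lstar_symbol_pos hΘ k).ne')

theorem norm_Lstar (hΘ : 0 ≤ Θ) (U : Coeffs) (k : ℤ) :
    ‖Lstar δ Θ U k‖ = ‖U k‖ + Real.sqrt δ * Θ * (|(k : ℝ)| ^ 4 * ‖U k‖) := by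
  rw [Lstar, norm_mul, Complex.norm_real, Real.norm_of_nonneg (Lstar_symbol_pos hΘ k).le,
    pow_abs, abs_of_nonneg (by positivity)]
  ring

theorem hasSum_norm_Lstar (hΘ : 0 ≤ Θ) {U : Coeffs} (hU : Summable (‖U ·‖))
    (hU4 : Summable fun k : ℤ => |(k : ℝ)| ^ 4 * ‖U k‖) :
    HasSum (‖Lstar δ Θ U ·‖)
      (∑' k, ‖U k‖ + Real.sqrt δ * Θ * ∑' k : ℤ, |(k : ℝ)| ^ 4 * ‖U k‖) := by
  simp only [norm_Lstar hΘ]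
  exact hU.hasSum.add (hU4.hasSum.mul_left _)

theorem summable_LstarInv (hδ : 0 < δ) (hΘ : 0 < Θ) {V : Coeffs} (hV : Summable (‖V ·‖)) :
    Summable (‖LstarInv δ Θ V ·‖) ∧ Summable (fun k : ℤ => |(k : ℝ)| ^ 4 * ‖LstarInv δ Θ V k‖) ∧
      ∑' k, ‖V k‖ = ∑' k, ‖LstarInv δ Θ V k‖ +
        Real.sqrt δ * Θ * ∑' k : ℤ, |(k : ℝ)| ^ 4 * ‖LstarInv δ Θ V k‖ := by
  have hs : 0 < Real.sqrt δ * Θ := by positivity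
  have hV' (k : ℤ) : ‖V k‖ = ‖LstarInv δ Θ V k‖ +
      Real.sqrt δ * Θ * (|(k : ℝ)| ^ 4 * ‖LstarInv δ Θ V k‖) := by
    rw [← norm_Lstar hΘ.le, Lstar_LstarInv hΘ.le]
  have hU0 : Summable (‖LstarInv δ Θ V ·‖) :=
    hV.of_nonneg_of_le (fun _ => norm_nonneg _) fun k => by
      rw [hV' k]
      have : 0 ≤ Real.sqrt δ * Θ * (|(k : ℝ)| ^ 4 * ‖LstarInv δ Θ V k‖) := by positivity
      linarith
  have hU4 : Summable fun k : ℤ => |(k : ℝ)| ^ 4 * ‖LstarInv δ Θ V k‖ :=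
    (hV.div_const (Real.sqrt δ * Θ)).of_nonneg_of_le (fun _ => by positivity) fun k => by
      rw [le_div_iff₀' hs, hV' k]
      linarith [norm_nonneg (LstarInv δ Θ V k)]
  refine ⟨hU0, hU4, ?_⟩
  simpa only [Lstar_LstarInv hΘ.le] using (hasSum_norm_Lstar (δ := δ) hΘ.le hU0 hU4).tsum_eq

end Lstar

section Bthin

variable {δ Θ ε : ℝ} {h : Coeffs}

theorem summable_Dx_three_and_tsum_le {U : Coeffs}
    (hU : Summable fun j : ℤ => |(j : ℝ)| ^ 4 * ‖U j‖) :
    Summable (fun j : ℤ => (1 + |(j : ℝ)|) * ‖Dx 3 U j‖) ∧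
      ∑' j : ℤ, (1 + |(j : ℝ)|) * ‖Dx 3 U j‖ ≤ 2 * ∑' j : ℤ, |(j : ℝ)| ^ 4 * ‖U j‖ := by
  have hpt (j : ℤ) : (1 + |(j : ℝ)|) * ‖Dx 3 U j‖ ≤ 2 * (|(j : ℝ)| ^ 4 * ‖U j‖) := by
    rw [norm_Dx, ← mul_assoc, ← mul_assoc]
    exact mul_le_mul_of_nonneg_right (one_add_abs_mul_pow_le j 2) (norm_nonneg _)
  have hsum := (hU.mul_left 2).of_nonneg_of_le (fun _ => by positivity) hpt
  exact ⟨hsum, (hsum.tsum_le_tsum hpt (hU.mul_left 2)).trans_eq tsum_mul_left⟩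

theorem Bthin_add (hh : Summable (‖h ·‖)) {U U' : Coeffs}
    (hU : Summable fun j : ℤ => |(j : ℝ)| ^ 4 * ‖U j‖)
    (hU' : Summable fun j : ℤ => |(j : ℝ)| ^ 4 * ‖U' j‖) :
    Bthin δ Θ ε h (U + U') = Bthin δ Θ ε h U + Bthin δ Θ ε h U' := by
  have norm_summable {U : Coeffs} (hU : Summable fun j : ℤ => |(j : ℝ)| ^ 4 * ‖U j‖) :
      Summable (‖Dx 3 U ·‖) :=
    summable_norm_of_summable_one_add_abs_mul (summable_Dx_three_and_tsum_le hU).1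
  have hDx : Dx 3 (U + U') = Dx 3 U + Dx 3 U' := by
    funext k
    simp only [Dx, Pi.add_apply, mul_add]
  funext k
  simp only [Bthin, hDx, conv_add hh (norm_summable hU) (norm_summable hU'), Dx, Pi.add_apply]
  ring

theorem summable_Bthin_and_tsum_le (hΘ : 0 ≤ Θ) (hε : 0 ≤ ε)
    (hh : Summable fun m : ℤ => (1 + |(m : ℝ)|) * ‖h m‖) {U : Coeffs}
    (hU : Summable fun j : ℤ => |(j : ℝ)| ^ 4 * ‖U j‖) :
    Summable (‖Bthin δ Θ ε h U ·‖) ∧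
      ∑' k, ‖Bthin δ Θ ε h U k‖ ≤ 2 * (ε * ∑' m : ℤ, (1 + |(m : ℝ)|) * ‖h m‖) *
        (Real.sqrt δ * Θ * ∑' j : ℤ, |(j : ℝ)| ^ 4 * ‖U j‖) := by
  obtain ⟨hg, hgle⟩ := summable_Dx_three_and_tsum_le hU
  obtain ⟨hsum, hle⟩ := summable_Dx_one_conv_and_tsum_le hh hg
  have hc : 0 ≤ Real.sqrt δ * Θ * ε := by positivity
  have hnorm (k : ℤ) : ‖Bthin δ Θ ε h U k‖ = Real.sqrt δ * Θ * ε * ‖Dx 1 (conv h (Dx 3 U)) k‖ := by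
    rw [Bthin, norm_mul, Complex.norm_real, Real.norm_of_nonneg hc]
  simp only [hnorm]
  refine ⟨hsum.mul_left _, ?_⟩
  rw [tsum_mul_left]
  calc Real.sqrt δ * Θ * ε * ∑' k, ‖Dx 1 (conv h (Dx 3 U)) k‖
      ≤ Real.sqrt δ * Θ * ε * ((∑' m : ℤ, (1 + |(m : ℝ)|) * ‖h m‖) *
          (2 * ∑' j : ℤ, |(j : ℝ)| ^ 4 * ‖U j‖)) := by gcongr; exact hle.trans (by gcongr)
    _ = _ := by ring

end Bthin

section LinearProblem

variable {δ Θ ε : ℝ} {h : Coeffs}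

theorem Bthin_LstarInv_add (hδ : 0 < δ) (hΘ : 0 < Θ)
    (hh : Summable fun m : ℤ => (1 + |(m : ℝ)|) * ‖h m‖) {V V' : Coeffs}
    (hV : Summable (‖V ·‖)) (hV' : Summable (‖V' ·‖)) :
    Bthin δ Θ ε h (LstarInv δ Θ (V + V')) =
      Bthin δ Θ ε h (LstarInv δ Θ V) + Bthin δ Θ ε h (LstarInv δ Θ V') := by
  have hInv : LstarInv δ Θ (V + V') = LstarInv δ Θ V + LstarInv δ Θ V' := by
    funext k
    exact add_div _ _ _
  rw [hInv, Bthin_add (summable_norm_of_summable_one_add_abs_mul hh)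
    (summable_LstarInv hδ hΘ hV).2.1 (summable_LstarInv hδ hΘ hV').2.1]

theorem summable_Bthin_LstarInv_and_tsum_le (hδ : 0 < δ) (hΘ : 0 < Θ) (hε : 0 ≤ ε)
    (hh : Summable fun m : ℤ => (1 + |(m : ℝ)|) * ‖h m‖)
    (hsmall : ε * ∑' m : ℤ, (1 + |(m : ℝ)|) * ‖h m‖ ≤ 1 / 4) {V : Coeffs}
    (hV : Summable (‖V ·‖)) :
    Summable (‖Bthin δ Θ ε h (LstarInv δ Θ V) ·‖) ∧
      ∑' k, ‖Bthin δ Θ ε h (LstarInv δ Θ V) k‖ ≤ ((1 / 2 : ℝ≥0) : ℝ) * ∑' k, ‖V k‖ := by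
  obtain ⟨-, hU4, hV_eq⟩ := summable_LstarInv hδ hΘ hV
  obtain ⟨hsum, hle⟩ := summable_Bthin_and_tsum_le (δ := δ) hΘ.le hε hh hU4
  refine ⟨hsum, hle.trans ?_⟩
  have : 0 ≤ Real.sqrt δ * Θ * ∑' k : ℤ, |(k : ℝ)| ^ 4 * ‖LstarInv δ Θ V k‖ := by positivity
  have : 0 ≤ ∑' k, ‖LstarInv δ Θ V k‖ := by positivity
  push_cast
  nlinarith

theorem exists_unique_Lthin_eq (hδ : 0 < δ) (hΘ : 0 < Θ) (hε : 0 ≤ ε)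
    (hh : Summable fun m : ℤ => (1 + |(m : ℝ)|) * ‖h m‖)
    (hsmall : ε * ∑' m : ℤ, (1 + |(m : ℝ)|) * ‖h m‖ ≤ 1 / 4)
    {F : Coeffs} (hF : Summable (‖F ·‖)) :
    ∃ U : Coeffs, InA 0 U ∧ InA 4 U ∧ Lthin δ Θ ε h U = F ∧
      Anorm 0 U + Real.sqrt δ * Θ * Anorm 4 U ≤ 2 * ∑' k, ‖F k‖ ∧
      ∀ U' : Coeffs, InA 0 U' → InA 4 U' → Lthin δ Θ ε h U' = F → U' = U := by
  simp only [InA, Anorm, Real.rpow_zero, one_mul, Real.rpow_ofNat]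
  have hT := fun V => summable_Bthin_LstarInv_and_tsum_le hδ hΘ hε hh hsmall (V := V)
  obtain ⟨V, hV, hVF, huniq⟩ := existsUnique_add_eq_of_tsum_norm_le _
    (fun _ _ => Bthin_LstarInv_add hδ hΘ hh) (by norm_num) hT hF
  obtain ⟨hU0, hU4, hV_eq⟩ := summable_LstarInv hδ hΘ hV
  have hLthin (U : Coeffs) :
      Lthin δ Θ ε h U = Lstar δ Θ U + Bthin δ Θ ε h (LstarInv δ Θ (Lstar δ Θ U)) := by
    rw [LstarInv_Lstar hΘ.le, Lthin_eq_Lstar_add_Bthin]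
  refine ⟨LstarInv δ Θ V, hU0, hU4, ?_, ?_, fun U' hU'0 hU'4 hU'F => ?_⟩
  · rw [hLthin, Lstar_LstarInv hΘ.le, hVF]
  · have hV_le : ∑' k, ‖V k‖ ≤ ∑' k, ‖F k‖ + ∑' k, ‖Bthin δ Θ ε h (LstarInv δ Θ V) k‖ := by
      rw [← hF.tsum_add (hT V hV).1]
      refine hV.tsum_le_tsum (fun k => ?_) (hF.add (hT V hV).1)
      rw [← sub_eq_of_eq_add (congrFun hVF k).symm]
      exact norm_sub_le _ _
    have := (hT V hV).2
    push_cast at this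
    linarith
  · have hV' := huniq _ (hasSum_norm_Lstar hΘ.le hU'0 hU'4).summable (by rw [← hLthin, hU'F])
    rw [← hV', LstarInv_Lstar hΘ.le]

end LinearProblem
/-- `χ h + (λ/4) ∂ₓ⁴ P_N h`, so that `N^N_{δ,ε}(h) = √δ ∂ₓ((1 + εh) ∂ₓ (pressure χ λ N h))`. -/
def pressure (χ lam : ℝ) (N : ℕ) (h : Coeffs) : Coeffs := fun m =>
  (χ : ℂ) * h m + ((lam / 4 : ℝ) : ℂ) * Dx 4 (PN N h) m

section Nthin

variable {δ ε χ lam : ℝ} {N : ℕ} {h : Coeffs}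

theorem NthinN_apply (k : ℤ) :
    NthinN δ ε χ lam N h k = ((Real.sqrt δ : ℝ) : ℂ) *
      (Dx 1 (Dx 1 (pressure χ lam N h)) k + ε * Dx 1 (conv h (Dx 1 (pressure χ lam N h))) k) := by
  change ((Real.sqrt δ : ℝ) : ℂ) * Dx 1 (fun j => Dx 1 (pressure χ lam N h) j +
    (ε : ℂ) * conv h (Dx 1 (pressure χ lam N h)) j) k = _
  simp only [Dx]
  ring

theorem NthinN_apply_zero : NthinN δ ε χ lam N h 0 = 0 := by
  simp [NthinN_apply, Dx]

theorem summable_NthinN_and_tsum_le_pressure (hε : 0 ≤ ε)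
    (hh : Summable fun m : ℤ => (1 + |(m : ℝ)|) * ‖h m‖)
    (hp : Summable fun k : ℤ => |(k : ℝ)| ^ 2 * ‖pressure χ lam N h k‖) :
    Summable (‖NthinN δ ε χ lam N h ·‖) ∧
      ∑' k, ‖NthinN δ ε χ lam N h k‖ ≤ 2 * Real.sqrt δ *
        (1 + ε * ∑' m : ℤ, (1 + |(m : ℝ)|) * ‖h m‖) *
        ∑' k : ℤ, |(k : ℝ)| ^ 2 * ‖pressure χ lam N h k‖ := by
  set p := pressure χ lam N h
  have hgpt (j : ℤ) : (1 + |(j : ℝ)|) * ‖Dx 1 p j‖ ≤ 2 * (|(j : ℝ)| ^ 2 * ‖p j‖) := by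
    rw [norm_Dx, ← mul_assoc, ← mul_assoc]
    exact mul_le_mul_of_nonneg_right (one_add_abs_mul_pow_le j 0) (norm_nonneg _)
  have hg := (hp.mul_left 2).of_nonneg_of_le (fun _ => by positivity) hgpt
  have hgle : ∑' j : ℤ, (1 + |(j : ℝ)|) * ‖Dx 1 p j‖ ≤ 2 * ∑' k : ℤ, |(k : ℝ)| ^ 2 * ‖p k‖ :=
    (hg.tsum_le_tsum hgpt (hp.mul_left 2)).trans_eq tsum_mul_left
  have hapt (k : ℤ) : ‖Dx 1 (Dx 1 p) k‖ ≤ (1 + |(k : ℝ)|) * ‖Dx 1 p k‖ := by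
    rw [norm_Dx, pow_one]
    gcongr
    linarith
  have ha := hg.of_nonneg_of_le (fun _ => norm_nonneg _) hapt
  obtain ⟨hb, hble⟩ := summable_Dx_one_conv_and_tsum_le hh hg
  have hpt (k : ℤ) : ‖NthinN δ ε χ lam N h k‖ ≤
      Real.sqrt δ * ‖Dx 1 (Dx 1 p) k‖ + Real.sqrt δ * ε * ‖Dx 1 (conv h (Dx 1 p)) k‖ := by
    rw [NthinN_apply, norm_mul, Complex.norm_real, Real.norm_of_nonneg (Real.sqrt_nonneg δ),
      mul_assoc, ← mul_add]
    gcongr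
    refine (norm_add_le _ _).trans_eq ?_
    rw [norm_mul, Complex.norm_real, Real.norm_of_nonneg hε]
  have hsum := (ha.mul_left (Real.sqrt δ)).add (hb.mul_left (Real.sqrt δ * ε))
  refine ⟨hsum.of_nonneg_of_le (fun _ => norm_nonneg _) hpt, ?_⟩
  refine (Summable.tsum_le_tsum hpt (hsum.of_nonneg_of_le (fun _ => norm_nonneg _) hpt)
    hsum).trans ?_
  rw [(ha.mul_left _).tsum_add (hb.mul_left _), tsum_mul_left, tsum_mul_left]
  calc Real.sqrt δ * ∑' k, ‖Dx 1 (Dx 1 p) k‖ +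
        Real.sqrt δ * ε * ∑' k, ‖Dx 1 (conv h (Dx 1 p)) k‖
      ≤ Real.sqrt δ * (2 * ∑' k : ℤ, |(k : ℝ)| ^ 2 * ‖p k‖) + Real.sqrt δ * ε *
          ((∑' m : ℤ, (1 + |(m : ℝ)|) * ‖h m‖) * (2 * ∑' k : ℤ, |(k : ℝ)| ^ 2 * ‖p k‖)) := by
        gcongr
        · exact (ha.tsum_le_tsum hapt hg).trans hgle
        · exact hble.trans (by gcongr)
    _ = _ := by ring

theorem norm_PN_le (f : Coeffs) (k : ℤ) : ‖PN N f k‖ ≤ ‖f k‖ := by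
  unfold PN
  split_ifs <;> simp

theorem InA.PN {s : ℝ} {f : Coeffs} (hf : InA s f) : InA s (PN N f) :=
  hf.of_nonneg_of_le (fun _ => by positivity) fun k => by gcongr; exact norm_PN_le f k

theorem summable_pressure_and_tsum_le (hχ : 0 ≤ χ) (hlam : 0 ≤ lam) (h2 : InA 2 h)
    (h6 : InA 6 (PN N h)) :
    Summable (fun k : ℤ => |(k : ℝ)| ^ 2 * ‖pressure χ lam N h k‖) ∧
      ∑' k : ℤ, |(k : ℝ)| ^ 2 * ‖pressure χ lam N h k‖ ≤
        χ * Anorm 2 h + lam / 4 * Anorm 6 (PN N h) := by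
  have hpt (k : ℤ) : |(k : ℝ)| ^ 2 * ‖pressure χ lam N h k‖ ≤
      χ * (|(k : ℝ)| ^ (2 : ℝ) * ‖h k‖) + lam / 4 * (|(k : ℝ)| ^ (6 : ℝ) * ‖PN N h k‖) := by
    have : ‖pressure χ lam N h k‖ ≤ χ * ‖h k‖ + lam / 4 * (|(k : ℝ)| ^ 4 * ‖PN N h k‖) := by
      refine (norm_add_le _ _).trans_eq ?_
      rw [norm_mul, norm_mul, norm_Dx, Complex.norm_real, Complex.norm_real,
        Real.norm_of_nonneg hχ, Real.norm_of_nonneg (by positivity)]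
    simp only [Real.rpow_ofNat]
    calc |(k : ℝ)| ^ 2 * ‖pressure χ lam N h k‖
        ≤ |(k : ℝ)| ^ 2 * (χ * ‖h k‖ + lam / 4 * (|(k : ℝ)| ^ 4 * ‖PN N h k‖)) := by gcongr
      _ = _ := by ring
  have hsum := (h2.mul_left χ).add (h6.mul_left (lam / 4))
  refine ⟨hsum.of_nonneg_of_le (fun _ => by positivity) hpt, ?_⟩
  refine (Summable.tsum_le_tsum hpt (hsum.of_nonneg_of_le (fun _ => by positivity) hpt)
    hsum).trans_eq ?_
  rw [(h2.mul_left χ).tsum_add (h6.mul_left (lam / 4)), tsum_mul_left, tsum_mul_left, Anorm, Anorm]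

theorem summable_NthinN_and_tsum_le (hχ : 0 ≤ χ) (hlam : 0 ≤ lam) (hε : 0 ≤ ε)
    (hh : Summable fun m : ℤ => (1 + |(m : ℝ)|) * ‖h m‖)
    (hsmall : ε * ∑' m : ℤ, (1 + |(m : ℝ)|) * ‖h m‖ ≤ 1 / 4) (h2 : InA 2 h) (h6 : InA 6 h) :
    Summable (‖NthinN δ ε χ lam N h ·‖) ∧
      ∑' k, ‖NthinN δ ε χ lam N h k‖ ≤
        5 / 2 * Real.sqrt δ * (χ * Anorm 2 h + lam / 4 * Anorm 6 (PN N h)) := by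
  obtain ⟨hp, hple⟩ := summable_pressure_and_tsum_le hχ hlam h2 (InA.PN h6)
  obtain ⟨hF, hFle⟩ := summable_NthinN_and_tsum_le_pressure (δ := δ) hε hh hp
  refine ⟨hF, hFle.trans ?_⟩
  calc 2 * Real.sqrt δ * (1 + ε * ∑' m : ℤ, (1 + |(m : ℝ)|) * ‖h m‖) *
        ∑' k : ℤ, |(k : ℝ)| ^ 2 * ‖pressure χ lam N h k‖
      ≤ 2 * Real.sqrt δ * (1 + 1 / 4) * (χ * Anorm 2 h + lam / 4 * Anorm 6 (PN N h)) := by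
        gcongr
    _ = _ := by ring

end Nthin

theorem Lthin_apply_zero (δ Θ ε : ℝ) (h U : Coeffs) : Lthin δ Θ ε h U 0 = U 0 := by
  simp [Lthin, Dx]

theorem eps_mul_tsum_le_of_Anorm_one_le {ε : ℝ} (hε : 0 ≤ ε) {f : Coeffs} (hf0 : f 0 = 0)
    (hf : InA 1 f) (hsmall : Anorm 1 f ≤ 1 / (8 * (1 + ε))) :
    Summable (fun k : ℤ => (1 + |(k : ℝ)|) * ‖f k‖) ∧
      ε * ∑' k : ℤ, (1 + |(k : ℝ)|) * ‖f k‖ ≤ 1 / 4 := by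
  obtain ⟨hsum, hle⟩ := summable_one_add_abs_mul_norm_and_tsum_le hf0 hf
  refine ⟨hsum, ?_⟩
  calc _ ≤ ε * (2 * (1 / (8 * (1 + ε)))) := by gcongr; linarith
    _ = ε / (1 + ε) / 4 := by field_simp; ring
    _ ≤ 1 / 4 := by gcongr; exact div_le_one_of_le₀ (by linarith) (by positivity)

/-- for zero-mean `h ∈ A⁶` small in `A¹`, the thin-film elliptic problem
`L_h U = N^N_{δ,ε}(h)` admits a unique zero-mean solution `U ∈ A⁴`, with
`‖U‖_{A⁰} + (√δ Θ/2)‖U‖_{A⁴} ≤ C√δ ((1+‖h‖_{A⁰})(‖h‖_{A²}+‖P_N h‖_{A⁶}) + ‖h‖_{A¹}‖P_N h‖_{A⁵})`,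
where `𝒞` and `C` are independent of `N`. -/
theorem thin_film_elliptic_solve (lam χ Θ δ ε : ℝ)
    (hlam : 0 < lam) (hχ : 0 < χ) (hΘ : 0 < Θ) (hδ : 0 < δ) (hε : 0 ≤ ε) :
    ∃ C₁ > 0, ∃ C > 0, ∀ N : ℕ, ∀ h : Coeffs, h 0 = 0 → InA 6 h → Anorm 1 h ≤ C₁ →
      ∃ U : Coeffs,
        (U 0 = 0 ∧ InA 4 U ∧
          (∀ k : ℤ, Lthin δ Θ ε h U k = NthinN δ ε χ lam N h k) ∧
          Anorm 0 U + Real.sqrt δ * Θ / 2 * Anorm 4 U ≤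
            C * Real.sqrt δ *
              ((1 + Anorm 0 h) * (Anorm 2 h + Anorm 6 (PN N h)) +
                Anorm 1 h * Anorm 5 (PN N h))) ∧
        (∀ U' : Coeffs, U' 0 = 0 → InA 4 U' →
          (∀ k : ℤ, Lthin δ Θ ε h U' k = NthinN δ ε χ lam N h k) → U' = U) := by
  refine ⟨1 / (8 * (1 + ε)), by positivity, 5 * (χ + lam), by positivity,
    fun N h h0 h6 hsmall => ?_⟩
  obtain ⟨hh, hεh⟩ := eps_mul_tsum_le_of_Anorm_one_le hε h0 (h6.mono h0 (by norm_num)) hsmall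
  obtain ⟨hF, hFle⟩ := summable_NthinN_and_tsum_le (δ := δ) (N := N) hχ.le hlam.le hε hh hεh
    (h6.mono h0 (by norm_num)) h6
  obtain ⟨U, -, hU4, hUF, hUle, huniq⟩ := exists_unique_Lthin_eq hδ hΘ hε hh hεh hF
  refine ⟨U, ⟨?_, hU4, congrFun hUF, ?_⟩, fun U' hU'0 hU'4 hU'F =>
    huniq U' (hU'4.mono hU'0 (by norm_num)) hU'4 (funext hU'F)⟩
  · rw [← Lthin_apply_zero δ Θ ε h U, hUF, NthinN_apply_zero]
  · have hA0 := Anorm_nonneg 0 h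
    have hA2 := Anorm_nonneg 2 h
    have hA6 := Anorm_nonneg 6 (PN N h)
    have hA15 := mul_nonneg (Anorm_nonneg 1 h) (Anorm_nonneg 5 (PN N h))
    have hχlam : 0 ≤ χ + lam := by positivity
    have := mul_nonneg (mul_nonneg (Real.sqrt_nonneg δ) hΘ.le) (Anorm_nonneg 4 U)
    calc Anorm 0 U + Real.sqrt δ * Θ / 2 * Anorm 4 U
        ≤ 5 * Real.sqrt δ * (χ * Anorm 2 h + lam / 4 * Anorm 6 (PN N h)) := by linarith
      _ ≤ 5 * Real.sqrt δ * ((χ + lam) *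
            ((1 + Anorm 0 h) * (Anorm 2 h + Anorm 6 (PN N h)) + Anorm 1 h * Anorm 5 (PN N h))) := by
          gcongr
          nlinarith [mul_nonneg hχlam (mul_nonneg hA0 (add_nonneg hA2 hA6)), mul_nonneg hχlam hA15,
            mul_nonneg hχ.le hA6, mul_nonneg hlam.le hA2, mul_nonneg hlam.le hA6]
      _ = _ := by ring
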